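/- If |f|² is exponentially distributed with mean ρ·σ² (i.e., f is circularly-symmetric complex Gaussian with variance ρσ²), then E[log(1 + |f|²/σ²)] = e^{1/ρ} E₁(1/ρ), where E₁ is the exponential integral. -/

import Mathlib

/-!
For `Y` exponential with rate `r`, integrating `E[log (1 + Y)]` by parts against the density
`r e^{-ry}` gives `∫₀^∞ e^{-ry} / (1 + y) dy`, since the boundary term `log (1 + y) e^{-ry}` vanishes
at both ends; the substitution `t = r (1 + y)` turns this into `e^r E₁(r)`. The theorem is the case
`Y = X / σ²`, which is exponential with rate `1 / ρ`.
-/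

open MeasureTheory Set

noncomputable def expInt (ξ : ℝ) : ℝ := ∫ t in Set.Ioi ξ, Real.exp (-t) / t

open Real Filter Topology

section

variable {E : Type*} [NormedAddCommGroup E] [NormedSpace ℝ E]

theorem integral_comp_add_right_Ioi (g : ℝ → E) (a d : ℝ) :
    ∫ x in Ioi a, g (x + d) = ∫ x in Ioi (a + d), g x := by
  have h := (measurePreserving_add_right volume d).setIntegral_preimage_emb
    (measurableEmbedding_addRight d) g (Ioi (a + d))
  simpa only [preimage_add_const_Ioi, add_sub_cancel_right] using h

open ProbabilityTheory

theorem integral_expMeasure {r : ℝ} (hr : 0 ≤ r) (g : ℝ → E) :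
    ∫ x, g x ∂expMeasure r = ∫ x in Ioi 0, (r * exp (-(r * x))) • g x := by
  have hpdf : ∀ x, (exponentialPDF r x).toReal • g x
      = (Ici 0).indicator (fun x => (r * exp (-(r * x))) • g x) x := by
    intro x
    rw [exponentialPDF_eq, ENNReal.toReal_ofReal (by split_ifs <;> positivity)]
    by_cases hx : 0 ≤ x <;> simp [hx]
  rw [← integral_Ici_eq_integral_Ioi, ← integral_indicator measurableSet_Ici, ← funext hpdf]
  exact integral_withDensity_eq_integral_toReal_smul
    (measurable_exponentialPDFReal r).ennreal_ofReal (ae_of_all _ fun _ => ENNReal.ofReal_lt_top) g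

theorem integral_comp_div_expMeasure {r s : ℝ} (hr : 0 ≤ r) (hs : 0 < s) (g : ℝ → E) :
    ∫ x, g (x / s) ∂expMeasure r = ∫ y, g y ∂expMeasure (r * s) := by
  rw [integral_expMeasure hr, integral_expMeasure (mul_nonneg hr hs.le)]
  have h := integral_comp_mul_left_Ioi (fun y => (r * exp (-(r * s * y))) • g y) 0 (inv_pos.mpr hs)
  simp only [mul_zero, inv_inv, ← mul_assoc, mul_inv_cancel_right₀ hs.ne'] at h
  simp only [inv_mul_eq_div] at h
  rw [h, ← integral_smul]
  simp only [smul_smul, ← mul_assoc, mul_comm s r]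

theorem expMeasure_inv_eq_withDensity (m : ℝ) :
    expMeasure m⁻¹ = volume.withDensity (fun x =>
      ENNReal.ofReal (if 0 ≤ x then (1 / m) * exp (-x / m) else 0)) := by
  show volume.withDensity (exponentialPDF _) = _
  refine congrArg _ (funext fun x => ?_)
  rw [exponentialPDF_eq, one_div, neg_div, div_eq_inv_mul]

end

theorem log_one_add_le_self {x : ℝ} (hx : 0 ≤ x) : log (1 + x) ≤ x := by
  linarith [log_le_sub_one_of_pos (by linarith : 0 < 1 + x)]

section

variable {r : ℝ}

theorem expInt_eq_integral_Ioi_one (hr : 0 < r) :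
    expInt r = ∫ u in Ioi 1, exp (-(r * u)) / u := by
  have h := integral_comp_mul_left_Ioi' (fun t => exp (-t) / t) 1 hr
  rw [mul_one, smul_eq_mul, ← integral_const_mul] at h
  rw [expInt, ← h]
  refine setIntegral_congr_fun measurableSet_Ioi fun u _ => ?_
  field_simp

theorem integral_exp_neg_mul_div_one_add (hr : 0 < r) :
    ∫ x in Ioi 0, exp (-(r * x)) / (1 + x) = exp r * expInt r := by
  have hshift := integral_comp_add_right_Ioi (fun u => exp (-(r * u)) / u) 0 1
  rw [zero_add] at hshift
  rw [expInt_eq_integral_Ioi_one hr, ← hshift, ← integral_const_mul]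
  refine setIntegral_congr_fun measurableSet_Ioi fun x _ => ?_
  rw [mul_div_assoc', ← exp_add, add_comm x 1]
  congr 2
  ring

theorem integrableOn_exp_neg_mul_div_one_add (hr : 0 < r) :
    IntegrableOn (fun x => exp (-(r * x)) / (1 + x)) (Ioi 0) := by
  refine (exp_neg_integrableOn_Ioi 0 hr).mono'
    (by fun_prop : Measurable fun x => exp (-(r * x)) / (1 + x)).aestronglyMeasurable ?_
  filter_upwards [ae_restrict_mem measurableSet_Ioi] with x (hx : 0 < x)
  rw [norm_of_nonneg (by positivity), neg_mul]
  exact div_le_self (exp_pos _).le (by linarith)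

theorem integrableOn_mul_exp_neg_mul_log_one_add (hr : 0 < r) :
    IntegrableOn (fun x => r * exp (-(r * x)) * log (1 + x)) (Ioi 0) := by
  have hmean : IntegrableOn (fun x => r * (x * exp (-(r * x)))) (Ioi 0) := by
    have h := (integrableOn_rpow_mul_exp_neg_mul_rpow (by norm_num : (-1 : ℝ) < 1) one_pos
      hr).const_mul r
    simp only [rpow_one, neg_mul] at h
    exact h
  refine hmean.mono' (by fun_prop) ?_
  filter_upwards [ae_restrict_mem measurableSet_Ioi] with x (hx : 0 < x)
  have hlog := log_nonneg (by linarith : (1 : ℝ) ≤ 1 + x)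
  rw [norm_of_nonneg (by positivity), mul_assoc, mul_comm (exp _)]
  gcongr
  exact log_one_add_le_self hx.le

theorem tendsto_log_one_add_mul_exp_neg_mul_atTop (hr : 0 < r) :
    Tendsto (fun x => log (1 + x) * exp (-(r * x))) atTop (𝓝 0) := by
  have hmean := tendsto_rpow_mul_exp_neg_mul_atTop_nhds_zero 1 r hr
  simp only [rpow_one, neg_mul] at hmean
  refine tendsto_of_tendsto_of_tendsto_of_le_of_le' tendsto_const_nhds hmean ?_ ?_
  · filter_upwards [eventually_ge_atTop 0] with x hx
    have := log_nonneg (by linarith : (1 : ℝ) ≤ 1 + x)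
    positivity
  · filter_upwards [eventually_ge_atTop 0] with x hx
    gcongr
    exact log_one_add_le_self hx

theorem integral_mul_exp_neg_mul_log_one_add (hr : 0 < r) :
    ∫ x in Ioi 0, r * exp (-(r * x)) * log (1 + x) = ∫ x in Ioi 0, exp (-(r * x)) / (1 + x) := by
  have hderiv : ∀ x ∈ Ici (0 : ℝ), HasDerivAt (fun y => -(log (1 + y) * exp (-(r * y))))
      (r * exp (-(r * x)) * log (1 + x) - exp (-(r * x)) / (1 + x)) x := by
    intro x (hx : 0 ≤ x)
    have hlog : HasDerivAt (fun y => log (1 + y)) (1 / (1 + x)) x :=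
      ((hasDerivAt_id x).const_add 1).log (by positivity)
    have hexp : HasDerivAt (fun y => exp (-(r * y))) (exp (-(r * x)) * -(r * 1)) x :=
      ((hasDerivAt_id x).const_mul r).neg.exp
    exact (hlog.mul hexp).neg.congr_deriv (by field_simp; ring)
  have hint₁ := integrableOn_mul_exp_neg_mul_log_one_add hr
  have hint₂ := integrableOn_exp_neg_mul_div_one_add hr
  have hftc := integral_Ioi_of_hasDerivAt_of_tendsto' hderiv (hint₁.sub hint₂)
    (tendsto_log_one_add_mul_exp_neg_mul_atTop hr).neg
  rw [integral_sub hint₁ hint₂] at hftc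
  simp only [add_zero, log_one, zero_mul, neg_zero, sub_zero] at hftc
  exact sub_eq_zero.mp hftc

theorem integral_log_one_add_expMeasure (hr : 0 < r) :
    ∫ x, log (1 + x) ∂ProbabilityTheory.expMeasure r = exp r * expInt r := by
  simp only [integral_expMeasure hr.le, smul_eq_mul]
  rw [integral_mul_exp_neg_mul_log_one_add hr, integral_exp_neg_mul_div_one_add hr]

end

theorem ergodic_capacity_rayleigh_general
    {Ω : Type*} [MeasureSpace Ω] (ℙ : Measure Ω)
    (X : Ω → ℝ) (hX : Measurable X) (ρ σ2 : ℝ) (hρ : 0 < ρ) (hσ2 : 0 < σ2)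
    (hlaw : Measure.map X ℙ
      = MeasureTheory.volume.withDensity (fun x =>
          ENNReal.ofReal
            (if 0 ≤ x then (1 / (ρ * σ2)) * Real.exp (-x / (ρ * σ2)) else 0))) :
    ∫ ω, Real.log (1 + X ω / σ2) ∂ℙ = Real.exp (1 / ρ) * expInt (1 / ρ) := by
  have hexp := hlaw.trans (expMeasure_inv_eq_withDensity (ρ * σ2)).symm
  have hrate : (ρ * σ2)⁻¹ * σ2 = 1 / ρ := by field_simp
  calc ∫ ω, log (1 + X ω / σ2) ∂ℙ
      = ∫ x, log (1 + x / σ2) ∂Measure.map X ℙ :=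
        (integral_map hX.aemeasurable
          (by fun_prop : Measurable fun x => log (1 + x / σ2)).aestronglyMeasurable).symm
    _ = exp (1 / ρ) * expInt (1 / ρ) := by
        rw [hexp, integral_comp_div_expMeasure (g := fun y => log (1 + y)) (by positivity) hσ2,
          hrate, integral_log_one_add_expMeasure (by positivity)]

/-- If `X = |f|²` is exponentially distributed with mean `ρσ²` (density
`(1/(ρσ²)) e^{-x/(ρσ²)}` on `x ≥ 0`), then
`E[log(1 + X/σ²)] = e^{1/ρ} E₁(1/ρ)`. -/
theorem ergodic_capacity_rayleigh
    {Ω : Type*} [MeasureSpace Ω] (ℙ : Measure Ω) [IsProbabilityMeasure ℙ]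
    (X : Ω → ℝ) (hX : Measurable X) (ρ σ2 : ℝ) (hρ : 0 < ρ) (hσ2 : 0 < σ2)
    (hlaw : Measure.map X ℙ
      = MeasureTheory.volume.withDensity (fun x =>
          ENNReal.ofReal
            (if 0 ≤ x then (1 / (ρ * σ2)) * Real.exp (-x / (ρ * σ2)) else 0))) :
    ∫ ω, Real.log (1 + X ω / σ2) ∂ℙ = Real.exp (1 / ρ) * expInt (1 / ρ) :=
  ergodic_capacity_rayleigh_general ℙ X hX ρ σ2 hρ hσ2 hlaw
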